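/- arXiv:2301.13534 — 4 statements merged into one kernel-verified Lean document; each statement's English description precedes it below -/
import Mathlib

section
/- For every Pandora's Box instance with a finite scenario set and every run of Weitzman's rule with partial updates (Algorithm 2, with any choice of minimizers at each step), the algorithm's total cost satisfies ALG ≤ (3 + 2√2) · OPT, where OPT is the minimum total cost over all partially-adaptive solutions. -/
/-!
At a step with `r` uncovered scenarios, let `θ` be an `r / (1 + √2)`-quantile of the optimal
per-scenario costs among them and `W` the uncovered scenarios of optimal cost at most `θ`.
Let `s₀ ∈ W` be the scenario on which the optimum stops last: every scenario of `W` gets its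
value from a box of the optimum's prefix up to `s₀`, whose opening cost is at most `θ`.
Grouping `W` by that box, some group has ratio at most `(r / |W| + 1) θ ≤ (2 + √2) θ`, so the
algorithm pays at most `(2 + √2) θ` per covered scenario. Since more than `(2 - √2) r` of the
uncovered scenarios have optimal cost at least `θ`, comparing level sets (layer cake) gives
`ALG ≤ (2 + √2) / (2 - √2) · OPT = (3 + 2√2) · OPT`.
-/

/-- Opening cost paid on scenario `s` by the partially-adaptive solution that opens the
boxes in the order `π` and stops on scenario `s` after opening box `π (t s)`. -/
noncomputable def optOpenCost {B S : Type*} [Fintype B] (c : B → ℝ)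
    (π : Fin (Fintype.card B) ≃ B) (t : S → Fin (Fintype.card B)) (s : S) : ℝ :=
  ∑ i ∈ Finset.Iic (t s), c (π i)

/-- Value selected on scenario `s` by the partially-adaptive solution `(π, t)`:
the minimum value among the opened boxes `π 0, …, π (t s)`. -/
noncomputable def optValue {B S : Type*} [Fintype B] (v : B → S → ℝ)
    (π : Fin (Fintype.card B) ≃ B) (t : S → Fin (Fintype.card B)) (s : S) : ℝ :=
  (Finset.Iic (t s)).inf' Finset.nonempty_Iic (fun i => v (π i) s)

open Finset MeasureTheory

theorem integrable_indicator_Ioo_const (z c : ℝ) :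
    Integrable ((Set.Ioo 0 z).indicator fun _ => c) :=
  (integrableOn_const measure_Ioo_lt_top.ne).integrable_indicator measurableSet_Ioo

theorem sum_mul_eq_integral_sum_indicator {ι : Type*} (s : Finset ι) (a x : ι → ℝ)
    (hx : ∀ i ∈ s, 0 ≤ x i) :
    ∑ i ∈ s, a i * x i = ∫ θ, ∑ i ∈ s, (Set.Ioo 0 (x i)).indicator (fun _ => a i) θ := by
  rw [integral_finsetSum _ fun i _ => integrable_indicator_Ioo_const (x i) (a i)]
  refine sum_congr rfl fun i hi => ?_
  rw [integral_indicator_const _ measurableSet_Ioo, Real.volume_real_Ioo_of_le (hx i hi),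
    smul_eq_mul, sub_zero, mul_comm]

theorem sum_indicator_Ioo_apply {ι : Type*} (s : Finset ι) (a x : ι → ℝ) (θ : ℝ) :
    ∑ i ∈ s, (Set.Ioo 0 (x i)).indicator (fun _ => a i) θ =
      if 0 < θ then ∑ i ∈ s with θ < x i, a i else 0 := by
  split_ifs with hθ
  · rw [sum_filter]
    exact sum_congr rfl fun i _ => by simp [Set.indicator, hθ]
  · exact sum_eq_zero fun i _ => Set.indicator_of_notMem (fun hm => hθ hm.1) _

theorem sum_mul_le_sum_mul_of_sum_lt_le {ι κ : Type*} (s : Finset ι) (t : Finset κ)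
    (a x : ι → ℝ) (b y : κ → ℝ) (hx : ∀ i ∈ s, 0 ≤ x i) (hy : ∀ j ∈ t, 0 ≤ y j)
    (h : ∀ θ, 0 < θ → ∑ i ∈ s with θ < x i, a i ≤ ∑ j ∈ t with θ < y j, b j) :
    ∑ i ∈ s, a i * x i ≤ ∑ j ∈ t, b j * y j := by
  rw [sum_mul_eq_integral_sum_indicator s a x hx, sum_mul_eq_integral_sum_indicator t b y hy]
  refine integral_mono (integrable_finsetSum _ fun i _ => integrable_indicator_Ioo_const _ _)
    (integrable_finsetSum _ fun j _ => integrable_indicator_Ioo_const _ _) fun θ => ?_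
  simp only [sum_indicator_Ioo_apply]
  split_ifs with hθ
  exacts [h θ hθ, le_rfl]

theorem exists_quantile {S : Type*} (R : Finset S) (f : S → ℝ) (q : ℝ) (hq : 0 < q)
    (hqR : q ≤ #R) :
    ∃ s ∈ R, q ≤ #{s' ∈ R | f s' ≤ f s} ∧ (#{s' ∈ R | f s' < f s} : ℝ) < q := by
  set G := {s ∈ R | q ≤ #{s' ∈ R | f s' ≤ f s}}
  have hG : G.Nonempty := by
    obtain ⟨s, hs, hmax⟩ := R.exists_max_image f (card_pos.1 (by exact_mod_cast hq.trans_le hqR))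
    refine ⟨s, mem_filter.2 ⟨hs, ?_⟩⟩
    rwa [filter_true_of_mem hmax]
  obtain ⟨s, hsG, hmin⟩ := G.exists_min_image f hG
  obtain ⟨hsR, hsq⟩ := mem_filter.1 hsG
  refine ⟨s, hsR, hsq, lt_of_not_ge fun hle => ?_⟩
  -- otherwise the largest value below `f s` would be a smaller element of `G`
  obtain ⟨s', hs'L, hmax⟩ := exists_max_image _ f
    (card_pos.1 (by exact_mod_cast hq.trans_le hle) : {s' ∈ R | f s' < f s}.Nonempty)
  obtain ⟨hs'R, hs's⟩ := mem_filter.1 hs'L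
  have hs'G : s' ∈ G := by
    refine mem_filter.2 ⟨hs'R, hle.trans ?_⟩
    exact_mod_cast card_le_card fun u hu => mem_filter.2 ⟨(mem_filter.1 hu).1, hmax u hu⟩
  exact (hmin s' hs'G).not_gt hs's

section Run

variable {S : Type*} [DecidableEq S] (R A : ℕ → Finset S) (T : ℕ)
  (hAsub : ∀ t < T, A t ⊆ R t) (hRsucc : ∀ t < T, R (t + 1) = R t \ A t)

include hAsub hRsucc in
theorem sum_card_Ico_add_card {t₀ t₁ : ℕ} (h₀₁ : t₀ ≤ t₁) (h₁ : t₁ ≤ T) :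
    ∑ t ∈ Ico t₀ t₁, #(A t) + #(R t₁) = #(R t₀) := by
  induction t₁, h₀₁ using Nat.le_induction with
  | base => simp
  | succ n hn ih =>
    rw [sum_Ico_succ_top hn, hRsucc n (by omega), add_assoc, add_comm (#(A n)),
      card_sdiff_add_card_eq_card (hAsub n (by omega))]
    exact ih (by omega)

include hAsub hRsucc in
theorem mul_sum_card_filter_lt_le [Fintype S] (hRT : R T = ∅) (f : S → ℝ) (x : ℕ → ℝ)
    {α : ℝ} (hα : 0 ≤ α) (hx : ∀ t < T, α * #(R t) ≤ #{s ∈ R t | x t ≤ f s}) (θ : ℝ) :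
    ∑ t ∈ range T with θ < x t, α * #(A t) ≤ #{s | θ < f s} := by
  set U := {t ∈ range T | θ < x t}
  rcases U.eq_empty_or_nonempty with hU | hU
  · rw [hU, sum_empty]
    positivity
  -- every step with threshold above `θ` covers scenarios still uncovered at the first one
  set t₀ := U.min' hU
  obtain ⟨ht₀T, hθt₀⟩ : t₀ ∈ range T ∧ θ < x t₀ := mem_filter.1 (U.min'_mem hU)
  have htail : ∑ t ∈ Ico t₀ T, (#(A t) : ℝ) = #(R t₀) := by
    have := sum_card_Ico_add_card R A T hAsub hRsucc (mem_range.1 ht₀T).le le_rfl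
    rw [hRT, card_empty, add_zero] at this
    exact_mod_cast this
  calc ∑ t ∈ U, α * #(A t)
      ≤ ∑ t ∈ Ico t₀ T, α * #(A t) := by
        refine sum_le_sum_of_subset_of_nonneg (fun t ht => ?_) fun _ _ _ => by positivity
        exact mem_Ico.2 ⟨U.min'_le t ht, mem_range.1 (mem_filter.1 ht).1⟩
    _ = α * #(R t₀) := by rw [← mul_sum, htail]
    _ ≤ #{s ∈ R t₀ | x t₀ ≤ f s} := hx t₀ (mem_range.1 ht₀T)
    _ ≤ #{s | θ < f s} := by
        exact_mod_cast card_le_card fun s hs =>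
          mem_filter.2 ⟨mem_univ s, hθt₀.trans_le (mem_filter.1 hs).2⟩

end Run

theorem le_initial_of_update_zero {B : Type*} [DecidableEq B] (c : B → ℝ) (hc : ∀ b, 0 ≤ c b)
    (cst : ℕ → B → ℝ) (bx : ℕ → B) (T : ℕ) (hcst0 : cst 0 = c)
    (hcstsucc : ∀ t < T, cst (t + 1) = Function.update (cst t) (bx t) 0) :
    ∀ t ≤ T, ∀ b, cst t b ≤ c b := by
  intro t
  induction t with
  | zero => simp [hcst0]
  | succ t ih =>
    intro ht b
    rw [hcstsucc t ht]
    rcases eq_or_ne b (bx t) with rfl | hb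
    · simp [hc]
    · rw [Function.update_of_ne hb]
      exact ih (by omega) b

section Optimum

variable {B S : Type*} [Fintype B] {c : B → ℝ} {v : B → S → ℝ}
  {π : Fin (Fintype.card B) ≃ B} {τ : S → Fin (Fintype.card B)}

variable (c v π τ) in
noncomputable def optCost (s : S) : ℝ :=
  optOpenCost c π τ s + optValue v π τ s

theorem optOpenCost_nonneg (hc : ∀ b, 0 ≤ c b) (s : S) : 0 ≤ optOpenCost c π τ s :=
  sum_nonneg fun _ _ => hc _

theorem optValue_nonneg (hv : ∀ b s, 0 ≤ v b s) (s : S) : 0 ≤ optValue v π τ s :=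
  le_inf' _ _ fun _ _ => hv _ _

theorem optCost_nonneg (hc : ∀ b, 0 ≤ c b) (hv : ∀ b s, 0 ≤ v b s) (s : S) :
    0 ≤ optCost c v π τ s :=
  add_nonneg (optOpenCost_nonneg hc s) (optValue_nonneg hv s)

theorem exists_ratio_le_of_optCost_le [DecidableEq S] (hc : ∀ b, 0 ≤ c b) {c' : B → ℝ}
    (hc' : ∀ b, c' b ≤ c b) (hv : ∀ b s, 0 ≤ v b s) {W : Finset S} (hW : W.Nonempty)
    {m θ : ℝ} (hm : 0 ≤ m) (hθ : ∀ s ∈ W, optCost c v π τ s ≤ θ) :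
    ∃ b, ∃ A' ⊆ W, A'.Nonempty ∧ (c' b * m + ∑ s ∈ A', v b s) / #A' ≤ (m / #W + 1) * θ := by
  obtain ⟨s₀, hs₀W, hs₀max⟩ := W.exists_max_image τ hW
  have hopen : ∑ i ∈ Iic (τ s₀), c (π i) ≤ θ :=
    (le_add_of_nonneg_right (optValue_nonneg hv s₀)).trans (hθ s₀ hs₀W)
  choose j hjτ hj using fun s => (Iic (τ s)).exists_mem_eq_inf' nonempty_Iic (fun i => v (π i) s)
  have hjW : ∀ s ∈ W, j s ∈ Iic (τ s₀) :=
    fun s hs => mem_Iic.2 ((mem_Iic.1 (hjτ s)).trans (hs₀max s hs))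
  have hval : ∀ s ∈ W, v (π (j s)) s ≤ θ := fun s hs =>
    (hj s).symm.trans_le ((le_add_of_nonneg_left (optOpenCost_nonneg hc s)).trans (hθ s hs))
  have hWpos : (0 : ℝ) < #W := by exact_mod_cast hW.card_pos
  have hsum : ∑ i ∈ W.image j, (c' (π i) * m + ∑ s ∈ W with j s = i, v (π i) s) ≤
      ∑ i ∈ W.image j, (m / #W + 1) * θ * #{s ∈ W | j s = i} := by
    have hfib : ∀ i ∈ W.image j, ∑ s ∈ W with j s = i, v (π i) s =
        ∑ s ∈ W with j s = i, v (π (j s)) s :=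
      fun i _ => sum_congr rfl fun s hs => by rw [(mem_filter.1 hs).2]
    calc ∑ i ∈ W.image j, (c' (π i) * m + ∑ s ∈ W with j s = i, v (π i) s)
        = ∑ i ∈ W.image j, c' (π i) * m + ∑ s ∈ W, v (π (j s)) s := by
          rw [sum_add_distrib, sum_congr rfl hfib,
            sum_fiberwise_of_maps_to fun s hs => mem_image_of_mem j hs]
      _ ≤ (∑ i ∈ Iic (τ s₀), c (π i)) * m + ∑ _s ∈ W, θ := by
          rw [sum_mul]
          refine add_le_add ?_ (sum_le_sum hval)
          calc ∑ i ∈ W.image j, c' (π i) * m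
              ≤ ∑ i ∈ W.image j, c (π i) * m :=
                sum_le_sum fun i _ => mul_le_mul_of_nonneg_right (hc' _) hm
            _ ≤ ∑ i ∈ Iic (τ s₀), c (π i) * m :=
                sum_le_sum_of_subset_of_nonneg (image_subset_iff.2 hjW)
                  fun i _ _ => mul_nonneg (hc _) hm
      _ ≤ θ * m + #W * θ := by
          rw [sum_const, nsmul_eq_mul]
          gcongr
      _ = ∑ i ∈ W.image j, (m / #W + 1) * θ * #{s ∈ W | j s = i} := by
          rw [← mul_sum, ← Nat.cast_sum, ← card_eq_sum_card_image]
          field_simp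
  obtain ⟨i, hi, hle⟩ := exists_le_of_sum_le (hW.image j) hsum
  have hfibne : ({s ∈ W | j s = i}).Nonempty := by
    obtain ⟨s, hs, rfl⟩ := mem_image.1 hi
    exact ⟨s, mem_filter.2 ⟨hs, rfl⟩⟩
  refine ⟨π i, _, filter_subset _ _, hfibne, ?_⟩
  rw [div_le_iff₀ (by exact_mod_cast hfibne.card_pos)]
  exact hle

theorem exists_threshold_of_ratio_min [DecidableEq S] (hc : ∀ b, 0 ≤ c b) {c' : B → ℝ}
    (hc' : ∀ b, c' b ≤ c b) (hv : ∀ b s, 0 ≤ v b s) {R A : Finset S} {b : B}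
    (hA : A.Nonempty) (hAR : A ⊆ R)
    (hmin : ∀ b' : B, ∀ A' : Finset S, A' ⊆ R → A'.Nonempty →
      (c' b * #R + ∑ s ∈ A, v b s) / #A ≤ (c' b' * #R + ∑ s ∈ A', v b' s) / #A') :
    ∃ θ, 0 ≤ θ ∧ c' b * #R + ∑ s ∈ A, v b s ≤ (3 + 2 * √2) * ((2 - √2) * #A * θ) ∧
      (2 - √2) * #R ≤ #{s ∈ R | θ ≤ optCost c v π τ s} := by
  have hr : (0 : ℝ) < #R := Nat.cast_pos.2 (hA.mono hAR).card_pos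
  have hsq : √2 * √2 = 2 := Real.mul_self_sqrt zero_le_two
  have hsq1 := Real.one_lt_sqrt_two
  -- `#R * (√2 - 1) = #R / (1 + √2)`
  obtain ⟨s₀, hs₀R, hW, hlow⟩ := exists_quantile R (optCost c v π τ) (#R * (√2 - 1))
    (by nlinarith) (by nlinarith)
  set θ := optCost c v π τ s₀
  set W := {s ∈ R | optCost c v π τ s ≤ θ}
  have hWpos : (0 : ℝ) < #W := by nlinarith
  obtain ⟨b', A', hA'W, hA'ne, hratio⟩ := exists_ratio_le_of_optCost_le hc hc' hv
    (card_pos.1 (by exact_mod_cast hWpos) : W.Nonempty) hr.le fun s hs => (mem_filter.1 hs).2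
  refine ⟨θ, optCost_nonneg hc hv s₀, ?_, ?_⟩
  · have hcost := (hmin b' A' (hA'W.trans (filter_subset _ _)) hA'ne).trans hratio
    rw [div_le_iff₀ (by exact_mod_cast hA.card_pos)] at hcost
    have hrW : (#R : ℝ) / #W ≤ 1 + √2 := by
      rw [div_le_iff₀ hWpos]
      nlinarith
    calc c' b * #R + ∑ s ∈ A, v b s
        ≤ (#R / #W + 1) * θ * #A := hcost
      _ ≤ (1 + √2 + 1) * θ * #A := by gcongr; exact optCost_nonneg hc hv s₀
      _ = (3 + 2 * √2) * ((2 - √2) * #A * θ) := by linear_combination (2 * θ * #A) * hsq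
  · have hsplit := card_filter_add_card_filter_not (s := R) fun s => θ ≤ optCost c v π τ s
    simp only [not_le] at hsplit
    have hsplitR : (#{s ∈ R | θ ≤ optCost c v π τ s} : ℝ) + #{s ∈ R | optCost c v π τ s < θ} = #R :=
      by exact_mod_cast hsplit
    linarith

end Optimum

theorem weitzman_partial_updates_approx_general
    {B S : Type*} [Fintype B] [Fintype S]
    [DecidableEq B] [DecidableEq S]
    (c : B → ℝ) (hc : ∀ b, 0 ≤ c b)
    (v : B → S → ℝ) (hv : ∀ b s, 0 ≤ v b s)
    -- a run of Algorithm 2 with `T` steps: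
    (T : ℕ) (R : ℕ → Finset S) (cst : ℕ → B → ℝ) (bx : ℕ → B) (A : ℕ → Finset S)
    (hcst0 : cst 0 = c)
    (hAsub : ∀ t < T, A t ⊆ R t)
    (hAne : ∀ t < T, (A t).Nonempty)
    -- `(bx t, A t)` minimizes the ratio over all boxes and nonempty subsets of `R t`:
    (hmin : ∀ t < T, ∀ b' : B, ∀ A' : Finset S, A' ⊆ R t → A'.Nonempty →
      (cst t (bx t) * (R t).card + ∑ s ∈ A t, v (bx t) s) / (A t).card ≤
        (cst t b' * (R t).card + ∑ s ∈ A', v b' s) / A'.card)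
    (hRsucc : ∀ t < T, R (t + 1) = R t \ A t)
    (hcstsucc : ∀ t < T, cst (t + 1) = Function.update (cst t) (bx t) 0)
    (hRT : R T = ∅)
    -- any partially-adaptive solution:
    (π : Fin (Fintype.card B) ≃ B) (τ : S → Fin (Fintype.card B)) :
    ∑ t ∈ Finset.range T, (cst t (bx t) * (R t).card + ∑ s ∈ A t, v (bx t) s) ≤
      (3 + 2 * Real.sqrt 2) * ∑ s, (optOpenCost c π τ s + optValue v π τ s) := by
  have hcst := le_initial_of_update_zero c hc cst bx T hcst0 hcstsucc
  have hstep (t : ℕ) (ht : t < T) := exists_threshold_of_ratio_min (π := π) (τ := τ) hc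
    (hcst t ht.le) hv (hAne t ht) (hAsub t ht) (hmin t ht)
  choose! θ hθ0 hcost hmass using hstep
  have hα : 0 ≤ 2 - √2 := by nlinarith [Real.sq_sqrt zero_le_two, Real.sqrt_nonneg 2]
  have hlayer := sum_mul_le_sum_mul_of_sum_lt_le (range T) univ (fun t => (2 - √2) * #(A t)) θ
    (fun _ => 1) (optCost c v π τ) (fun t ht => hθ0 t (mem_range.1 ht))
    (fun s _ => optCost_nonneg hc hv s) fun θ' _ => by
      simpa using mul_sum_card_filter_lt_le R A T hAsub hRsucc hRT _ θ hα hmass θ'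
  calc ∑ t ∈ range T, (cst t (bx t) * #(R t) + ∑ s ∈ A t, v (bx t) s)
      ≤ ∑ t ∈ range T, (3 + 2 * √2) * ((2 - √2) * #(A t) * θ t) :=
        sum_le_sum fun t ht => hcost t (mem_range.1 ht)
    _ ≤ (3 + 2 * √2) * ∑ s, optCost c v π τ s := by
        rw [← mul_sum]
        gcongr
        simpa using hlayer

/-- Weitzman's rule with partial updates (Algorithm 2) is a `(3 + 2√2)`-approximation
against the partially-adaptive optimal: for every run of the algorithm (any choice of
minimizing box `bx t` and scenario set `A t` at each step `t`) and every
partially-adaptive solution `(π, τ)`, the total cost of the algorithm is at most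
`(3 + 2√2)` times the total cost of `(π, τ)`. -/
theorem weitzman_partial_updates_approx
    {B S : Type*} [Fintype B] [Fintype S] [Nonempty B] [Nonempty S]
    [DecidableEq B] [DecidableEq S]
    (c : B → ℝ) (hc : ∀ b, 0 ≤ c b)
    (v : B → S → ℝ) (hv : ∀ b s, 0 ≤ v b s)
    -- a run of Algorithm 2 with `T` steps:
    (T : ℕ) (R : ℕ → Finset S) (cst : ℕ → B → ℝ) (bx : ℕ → B) (A : ℕ → Finset S)
    (hR0 : R 0 = Finset.univ)
    (hcst0 : cst 0 = c)
    (hAsub : ∀ t < T, A t ⊆ R t)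
    (hAne : ∀ t < T, (A t).Nonempty)
    -- `(bx t, A t)` minimizes the ratio over all boxes and nonempty subsets of `R t`:
    (hmin : ∀ t < T, ∀ b' : B, ∀ A' : Finset S, A' ⊆ R t → A'.Nonempty →
      (cst t (bx t) * (R t).card + ∑ s ∈ A t, v (bx t) s) / (A t).card ≤
        (cst t b' * (R t).card + ∑ s ∈ A', v b' s) / A'.card)
    (hRsucc : ∀ t < T, R (t + 1) = R t \ A t)
    (hcstsucc : ∀ t < T, cst (t + 1) = Function.update (cst t) (bx t) 0)
    (hRT : R T = ∅)
    -- any partially-adaptive solution: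
    (π : Fin (Fintype.card B) ≃ B) (τ : S → Fin (Fintype.card B)) :
    ∑ t ∈ Finset.range T, (cst t (bx t) * (R t).card + ∑ s ∈ A t, v (bx t) s) ≤
      (3 + 2 * Real.sqrt 2) * ∑ s, (optOpenCost c π τ s + optValue v π τ s) :=
  weitzman_partial_updates_approx_general c hc v hv T R cst bx A hcst0 hAsub hAne hmin hRsucc
    hcstsucc hRT π τ
end

section
/- Let T be a finite rooted tree with a finite nonempty multiset of nonnegative real weights at each node, and let ρ ∈ (0,1]. Then ρ · cost(T^{(ρ)}) ≤ cost(T), where T^{(ρ)} is the tree obtained by replacing, at every node u, each of the |w_u| weights by the top ρ-percentile q^ρ(T_u) of all weights in the subtree rooted at u. -/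
/-- A finite rooted tree carrying a multiset of real weights at each node. -/
inductive WTree : Type
  | node (w : Multiset ℝ) (children : List WTree)

namespace WTree

/-- The multiset of all weights appearing in the tree. -/
def weights : WTree → Multiset ℝ
  | node w cs => w + (cs.attach.map (fun c => weights c.1)).sum
decreasing_by
  simp only [node.sizeOf_spec]
  have := List.sizeOf_lt_of_mem c.2
  omega

/-- Every node carries a nonempty multiset of nonnegative weights. -/
def Valid : WTree → Prop
  | node w cs => w ≠ 0 ∧ (∀ x ∈ w, (0:ℝ) ≤ x) ∧ ∀ c ∈ cs.attach, Valid c.1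
decreasing_by
  simp only [node.sizeOf_spec]
  have := List.sizeOf_lt_of_mem c.2
  omega

/-- The `k`-th largest element of a multiset of reals (1-indexed). -/
noncomputable def kthLargest (m : Multiset ℝ) (k : ℕ) : ℝ :=
  (m.sort (· ≤ ·)).getD (Multiset.card m - k) 0

/-- The cost of the rescaled tree `T^{(ρ)}`: at every node `u`, each of the `|w_u|`
weights is replaced by the top `ρ`-percentile `q^ρ(T_u)` (the `⌈ρ·N_u⌉`-th largest
weight in the subtree rooted at `u`). -/
noncomputable def scaledCost (ρ : ℝ) : WTree → ℝ
  | node w cs =>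
      (Multiset.card w : ℝ) *
          kthLargest (weights (node w cs))
            ⌈ρ * (Multiset.card (weights (node w cs)) : ℝ)⌉₊ +
        (cs.attach.map (fun c => scaledCost ρ c.1)).sum
decreasing_by
  simp only [node.sizeOf_spec]
  have := List.sizeOf_lt_of_mem c.2
  omega

end WTree

/-!
Write `excess s m = Σ_{x ∈ m} (x - s)⁺` and `slack ρ s T = Σ_u |w_u| (q^ρ(T_u) - s)⁺`. For every
threshold `s` we show `ρ · slack ρ s T ≤ excess s (weights T)` by induction on `T`; the case
`s = 0` is the theorem, since the weights are nonnegative and `q ≤ q⁺`. At a root with percentile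
`q`, set `t = max q s`. Lowering the threshold of a child `c` from `t` to `s` raises its slack by at
most `N_c (t - s)`, so by induction the left side is at most `excess t (weights T) + ρ N (t - s)`.
Since at least `⌈ρ N⌉ ≥ ρ N` weights of `T` are `≥ q`, lowering the threshold of `excess` from `t`
to `s` gains at least `⌈ρ N⌉ (t - s)`.
-/

open Multiset (card)

theorem Multiset.mem_list_sum {α : Type*} {l : List (Multiset α)} {x : α} :
    x ∈ l.sum ↔ ∃ m ∈ l, x ∈ m := by
  induction l <;> simp [*]

namespace WTree

theorem le_card_filter_kthLargest_le {m : Multiset ℝ} {k : ℕ} (hk : k ≤ card m) :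
    k ≤ card (m.filter (kthLargest m k ≤ ·)) := by
  rcases Nat.eq_zero_or_pos k with rfl | hk0
  · exact Nat.zero_le _
  set l := m.sort (· ≤ ·)
  have hi : card m - k < l.length := by rw [Multiset.length_sort]; omega
  have hdrop : l.drop (card m - k) = kthLargest m k :: l.drop (card m - k + 1) := by
    rw [List.drop_eq_getElem_cons hi, kthLargest, List.getD_eq_getElem _ _ hi]
  have hge : ∀ x ∈ l.drop (card m - k), kthLargest m k ≤ x := by
    have hsorted := (Multiset.pairwise_sort m (· ≤ ·)).drop (i := card m - k)
    rw [hdrop, List.pairwise_cons] at hsorted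
    rw [hdrop, List.forall_mem_cons]
    exact ⟨le_rfl, hsorted.1⟩
  have hsub : (l.drop (card m - k) : Multiset ℝ) ≤ m := by
    rw [← Multiset.sort_eq m (· ≤ ·)]
    exact Multiset.coe_le.2 (List.drop_sublist _ _).subperm
  calc k = card (l.drop (card m - k) : Multiset ℝ) := by
        rw [Multiset.coe_card, List.length_drop, Multiset.length_sort]; omega
    _ ≤ card (m.filter (kthLargest m k ≤ ·)) := by
        rw [← (Multiset.filter_eq_self (s := (l.drop (card m - k) : Multiset ℝ))).2 hge]
        exact Multiset.card_le_card (Multiset.filter_le_filter _ hsub)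

noncomputable def excess (s : ℝ) (m : Multiset ℝ) : ℝ := (m.map fun x => (x - s)⁺).sum

theorem excess_add (s : ℝ) (a b : Multiset ℝ) : excess s (a + b) = excess s a + excess s b := by
  simp [excess]

theorem excess_list_sum (s : ℝ) (l : List (Multiset ℝ)) :
    excess s l.sum = (l.map (excess s)).sum := by
  induction l with
  | nil => simp [excess]
  | cons a l ih => rw [List.sum_cons, excess_add, ih, List.map_cons, List.sum_cons]

theorem excess_nonneg (s : ℝ) (m : Multiset ℝ) : 0 ≤ excess s m :=
  Multiset.sum_nonneg fun _ hx => by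
    obtain ⟨x, -, rfl⟩ := Multiset.mem_map.1 hx
    exact posPart_nonneg _

theorem excess_zero_of_nonneg {m : Multiset ℝ} (hm : ∀ x ∈ m, 0 ≤ x) : excess 0 m = m.sum := by
  rw [excess]
  conv_rhs => rw [← Multiset.map_id' m]
  exact congrArg _ <| Multiset.map_congr rfl fun x hx => by simp [hm x hx]

theorem excess_add_card_filter_mul_le (m : Multiset ℝ) {s t : ℝ} (hst : s ≤ t) :
    excess t m + card (m.filter (t ≤ ·)) * (t - s) ≤ excess s m := by
  set F := m.filter (t ≤ ·)
  set G := m.filter (¬ t ≤ ·)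
  have hsplit (f : ℝ → ℝ) : (m.map f).sum = (F.map f).sum + (G.map f).sum := by
    rw [← Multiset.sum_add, ← Multiset.map_add, Multiset.filter_add_not]
  have hF : (F.map fun x => (x - s)⁺).sum = (F.map fun x => (x - t)⁺ + (t - s)).sum :=
    congrArg _ <| Multiset.map_congr rfl fun x hx => by
      have := (Multiset.mem_filter.1 hx).2
      simp only [posPart_eq_self.2 (sub_nonneg.2 this),
        posPart_eq_self.2 (sub_nonneg.2 (hst.trans this))]
      ring
  have hG : (G.map fun x => (x - t)⁺).sum ≤ (G.map fun x => (x - s)⁺).sum :=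
    Multiset.sum_map_le_sum_map _ _ fun x _ => posPart_mono (by linarith)
  rw [Multiset.sum_map_add, Multiset.map_const', Multiset.sum_replicate, nsmul_eq_mul] at hF
  rw [excess, excess, hsplit, hsplit (fun x => (x - s)⁺)]
  linarith

@[elab_as_elim, induction_eliminator]
theorem induction {P : WTree → Prop} (node : ∀ w cs, (∀ c ∈ cs, P c) → P (node w cs))
    (T : WTree) : P T :=
  WTree.rec (motive_2 := fun cs => ∀ c ∈ cs, P c) node (by simp)
    (fun _ _ hc hcs => List.forall_mem_cons.2 ⟨hc, hcs⟩) T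

theorem weights_node (w : Multiset ℝ) (cs : List WTree) :
    weights (node w cs) = w + (cs.map weights).sum := by
  rw [weights, List.attach_map_val (f := weights)]

theorem card_weights_node (w : Multiset ℝ) (cs : List WTree) :
    (card (weights (node w cs)) : ℝ) = card w + (cs.map fun c => (card (weights c) : ℝ)).sum := by
  have := map_list_sum Multiset.cardHom (cs.map weights)
  simp only [Multiset.cardHom_apply, List.map_map] at this
  rw [weights_node, Multiset.card_add, this]
  push_cast [Nat.cast_list_sum, List.map_map]
  rfl

theorem weights_nonneg {T : WTree} (hT : T.Valid) : ∀ x ∈ weights T, 0 ≤ x := by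
  induction T with
  | node w cs ih =>
    rw [Valid] at hT
    obtain ⟨-, hw, hcs⟩ := hT
    intro x hx
    rw [weights_node, Multiset.mem_add, Multiset.mem_list_sum] at hx
    rcases hx with hx | ⟨_, hm, hxm⟩
    · exact hw x hx
    · obtain ⟨c, hc, rfl⟩ := List.mem_map.1 hm
      exact ih c hc (hcs ⟨c, hc⟩ (List.mem_attach _ _)) x hxm

noncomputable def percentile (ρ : ℝ) (T : WTree) : ℝ :=
  kthLargest (weights T) ⌈ρ * (card (weights T) : ℝ)⌉₊

theorem scaledCost_node (ρ : ℝ) (w : Multiset ℝ) (cs : List WTree) :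
    scaledCost ρ (node w cs) = card w * percentile ρ (node w cs) + (cs.map (scaledCost ρ)).sum := by
  rw [scaledCost, List.attach_map_val (f := scaledCost ρ)]
  rfl

noncomputable def slack (ρ s : ℝ) : WTree → ℝ
  | node w cs =>
      card w * (percentile ρ (node w cs) - s)⁺ + (cs.attach.map fun c => slack ρ s c.1).sum
decreasing_by
  simp only [node.sizeOf_spec]
  have := List.sizeOf_lt_of_mem c.2
  omega

theorem slack_node (ρ s : ℝ) (w : Multiset ℝ) (cs : List WTree) :
    slack ρ s (node w cs) =
      card w * (percentile ρ (node w cs) - s)⁺ + (cs.map (slack ρ s)).sum := by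
  rw [slack, List.attach_map_val (f := slack ρ s)]

theorem scaledCost_le_slack_zero (ρ : ℝ) (T : WTree) : scaledCost ρ T ≤ slack ρ 0 T := by
  induction T with
  | node w cs ih =>
    rw [scaledCost_node, slack_node, sub_zero]
    gcongr
    · exact le_posPart _
    · exact List.sum_le_sum ih

theorem slack_le_slack_add (ρ : ℝ) {s t : ℝ} (hst : s ≤ t) (T : WTree) :
    slack ρ s T ≤ slack ρ t T + card (weights T) * (t - s) := by
  induction T with
  | node w cs ih =>
    set q := percentile ρ (node w cs)
    have hroot : (q - s)⁺ ≤ (q - t)⁺ + (t - s) := by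
      rw [posPart_def]
      exact sup_le (by linarith [le_posPart (q - t)]) (by linarith [posPart_nonneg (q - t)])
    have hchildren := List.sum_le_sum ih
    rw [List.sum_map_add, List.sum_map_mul_right] at hchildren
    rw [slack_node, slack_node, card_weights_node]
    nlinarith [mul_le_mul_of_nonneg_left hroot (Nat.cast_nonneg (α := ℝ) (card w))]

theorem mul_slack_le_excess {ρ : ℝ} (hρ0 : 0 ≤ ρ) (hρ1 : ρ ≤ 1) (T : WTree) (s : ℝ) :
    ρ * slack ρ s T ≤ excess s (weights T) := by
  induction T generalizing s with
  | node w cs ih =>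
    set m := weights (node w cs) with hm
    set q := percentile ρ (node w cs)
    set t := max q s
    have hst : s ≤ t := le_max_right q s
    have hroot : (q - s)⁺ = t - s := by
      rw [posPart_def, ← sub_self s, max_sub_sub_right]
    have hchildren (c : WTree) (hc : c ∈ cs) :
        ρ * slack ρ s c ≤ excess t (weights c) + ρ * card (weights c) * (t - s) := by
      nlinarith [ih c hc t, mul_le_mul_of_nonneg_left (slack_le_slack_add ρ hst c) hρ0]
    have hcount : (⌈ρ * (card m : ℝ)⌉₊ : ℝ) * (t - s) ≤ card (m.filter (t ≤ ·)) * (t - s) := by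
      rcases le_total q s with hqs | hsq
      · simp [t, max_eq_right hqs]
      · have hkN : ⌈ρ * (card m : ℝ)⌉₊ ≤ card m :=
          Nat.ceil_le.2 (mul_le_of_le_one_left (Nat.cast_nonneg _) hρ1)
        rw [show t = q from max_eq_left hsq]
        gcongr
        exact_mod_cast le_card_filter_kthLargest_le hkN
    calc ρ * slack ρ s (node w cs)
        = ρ * card w * (t - s) + (cs.map fun c => ρ * slack ρ s c).sum := by
          rw [slack_node, hroot, List.sum_map_mul_left]; ring
      _ ≤ ρ * card w * (t - s)
            + (cs.map fun c => excess t (weights c) + ρ * card (weights c) * (t - s)).sum :=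
          (add_le_add_iff_left _).2 (List.sum_le_sum hchildren)
      _ = ρ * card m * (t - s) + (cs.map fun c => excess t (weights c)).sum := by
          rw [List.sum_map_add, List.sum_map_mul_right, List.sum_map_mul_left, hm,
            card_weights_node]
          ring
      _ ≤ ⌈ρ * (card m : ℝ)⌉₊ * (t - s) + excess t m := by
          have hsplit : excess t m = excess t w + (cs.map fun c => excess t (weights c)).sum := by
            rw [hm, weights_node, excess_add, excess_list_sum, List.map_map]
            rfl
          rw [hsplit]
          gcongr
          · exact Nat.le_ceil _
          · exact le_add_of_nonneg_left (excess_nonneg t w)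
      _ ≤ excess s m := by linarith [excess_add_card_filter_mul_le m hst]

end WTree

/-- Lemma 3.1 (tree-histogram scaling): for every finite weighted tree `T` with a
nonempty multiset of nonnegative weights at each node and every `ρ ∈ (0,1]`,
`ρ · cost(T^{(ρ)}) ≤ cost(T)`. -/
theorem scaledCost_le_cost (ρ : ℝ) (hρ0 : 0 < ρ) (hρ1 : ρ ≤ 1)
    (T : WTree) (hT : T.Valid) :
    ρ * WTree.scaledCost ρ T ≤ (WTree.weights T).sum :=
  calc ρ * WTree.scaledCost ρ T ≤ ρ * WTree.slack ρ 0 T :=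
        mul_le_mul_of_nonneg_left (WTree.scaledCost_le_slack_zero ρ T) hρ0.le
    _ ≤ WTree.excess 0 (WTree.weights T) := WTree.mul_slack_le_excess hρ0.le hρ1 T 0
    _ = (WTree.weights T).sum := WTree.excess_zero_of_nonneg (WTree.weights_nonneg hT)
end

section
/- Let v_1, …, v_m be nonnegative reals and c > 0. Then the unique real σ* satisfying (1/m)·Σ_{i=1}^m max(σ* − v_i, 0) = c equals the minimum over all nonempty subsets A ⊆ {1,…,m} of (c·m + Σ_{i∈A} v_i)/|A|. -/
/-! Writing `x⁺ = max x 0`, for every set `A` of indices the sum `∑ i ∈ A, (σ - v i)` is at most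
`∑ i, (σ - v i)⁺ = c·m`, i.e. `σ ≤ (c·m + ∑ i ∈ A, v i) / |A|`; and for `A = {i | v i < σ}` the two
sums agree, so the bound is attained. This `A` is nonempty because `c > 0`. -/

open Finset

section PositivePartSums

variable {ι : Type*} [Fintype ι] (v : ι → ℝ) (σ : ℝ)

theorem card_mul_sub_sum_le_sum_max_sub (A : Finset ι) :
    #A * σ - ∑ i ∈ A, v i ≤ ∑ i, max (σ - v i) 0 :=
  calc #A * σ - ∑ i ∈ A, v i = ∑ i ∈ A, (σ - v i) := by
        rw [sum_sub_distrib, sum_const, nsmul_eq_mul]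
    _ ≤ ∑ i ∈ A, max (σ - v i) 0 := sum_le_sum fun i _ => le_max_left _ _
    _ ≤ ∑ i, max (σ - v i) 0 :=
        sum_le_sum_of_subset_of_nonneg (subset_univ A) fun i _ _ => le_max_right _ _

theorem sum_max_sub_eq_sum_filter_lt :
    ∑ i, max (σ - v i) 0 = #{i | v i < σ} * σ - ∑ i with v i < σ, v i := by
  rw [← nsmul_eq_mul, ← sum_const, ← sum_sub_distrib, sum_filter]
  refine sum_congr rfl fun i _ => ?_
  split_ifs with h
  · exact max_eq_left (sub_nonneg.mpr h.le)
  · exact max_eq_right (sub_nonpos.mpr (not_lt.mp h))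

theorem eq_inf'_of_sum_max_sub_eq {C : ℝ} (hC : 0 < C) (hσ : ∑ i, max (σ - v i) 0 = C)
    (hne : (univ.powerset.filter fun A : Finset ι => A.Nonempty).Nonempty) :
    σ = (univ.powerset.filter fun A : Finset ι => A.Nonempty).inf' hne
      (fun A => (C + ∑ i ∈ A, v i) / #A) := by
  refine le_antisymm (le_inf' _ _ fun A hA => ?_) ?_
  · have hcard : (0 : ℝ) < #A := by exact_mod_cast card_pos.mpr (mem_filter.mp hA).2
    rw [le_div_iff₀ hcard]
    linarith [card_mul_sub_sum_le_sum_max_sub v σ A]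
  · set A : Finset ι := {i | v i < σ}
    have hA : #A * σ - ∑ i ∈ A, v i = C := (sum_max_sub_eq_sum_filter_lt v σ).symm.trans hσ
    have hAne : A.Nonempty := by
      rw [nonempty_iff_ne_empty]
      rintro hAe
      rw [hAe, card_empty, sum_empty, Nat.cast_zero] at hA
      linarith
    have hcard : (0 : ℝ) < #A := by exact_mod_cast card_pos.mpr hAne
    calc _ ≤ (C + ∑ i ∈ A, v i) / #A := inf'_le _ (mem_filter.mpr ⟨mem_powerset.mpr (subset_univ A), hAne⟩)
      _ = σ := by rw [div_eq_iff hcard.ne']; linarith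

end PositivePartSums

/-- Weitzman's reservation value: the unique `σ*` with
`(1/m)·∑ i, (σ* − v i)⁺ = c` equals the subset-ratio formula
`min_{∅ ≠ A ⊆ [m]} (c·m + ∑_{i∈A} v i)/|A|`. -/
theorem reservation_value_eq_min_subset_ratio (m : ℕ) (hm : 0 < m)
    (v : Fin m → ℝ) (c : ℝ) (hc : 0 < c)
    (σ : ℝ) (hσ : (1 / (m : ℝ)) * ∑ i, max (σ - v i) 0 = c) :
    σ = ((Finset.univ : Finset (Fin m)).powerset.filter (fun A => A.Nonempty)).inf'
        ⟨Finset.univ, by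
          simp only [Finset.mem_filter, Finset.mem_powerset, subset_refl, true_and]
          exact Finset.univ_nonempty_iff.mpr (Fin.pos_iff_nonempty.mp hm)⟩
        (fun A => (c * m + ∑ i ∈ A, v i) / A.card) := by
  have hm' : (0 : ℝ) < m := by exact_mod_cast hm
  have hsum : ∑ i, max (σ - v i) 0 = c * m := by
    rw [one_div, inv_mul_eq_iff_eq_mul₀ hm'.ne'] at hσ
    linarith
  exact eq_inf'_of_sum_max_sub_eq v σ (mul_pos hc hm') hsum _
end

section
/- Fix n boxes with unit opening costs, opened in a fixed order 1, …, n. For thresholds τ ∈ [0,∞)^n and a value vector v ∈ [0,∞)^n, let cost(τ, v) = (i*−1) + min_{j < i*} v_j, where i* is the least index i such that min_{j < i} v_j ≤ τ_i (so the policy stops before opening box i), and i* = n+1 if no such index exists (by convention min over the empty set is +∞, so the policy always opens box 1). Then for every ε > 0 and every v ∈ [0,∞)^n, the capped thresholds τ' defined by τ'_i = min(τ_i, n/ε) satisfy cost(τ', v) ≤ (1+ε) · cost(τ, v). -/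
/-!
Capping can only delay stopping, so the capped policy opens at least as many boxes and ends
with a value no larger. If it opens exactly as many boxes, the two costs agree. Otherwise the
original policy stops after some box `k` where the capped one continues, so the cap `n/ε` lies
strictly below the best value `m` of the first `k` boxes; then the capped cost is at most
`n + m < (1 + ε) m`, which is at most `(1 + ε)` times the original cost.
-/

open scoped Classical

/-- Number of boxes opened by the threshold policy that opens boxes `1, …, n` in order
and stops before opening box `i` as soon as the best value seen so far is at most `τ i`:
it opens `k` boxes for the least `k ∈ [1, n-1]` with `min_{j ≤ k} v j ≤ τ (k+1)`,
and opens all `n` boxes if no such `k` exists. -/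
noncomputable def numOpened (n : ℕ) (τ v : ℕ → ℝ) : ℕ :=
  if h : ∃ k, (1 ≤ k ∧ k < n) ∧ ∃ j, 1 ≤ j ∧ j ≤ k ∧ v j ≤ τ (k + 1) then Nat.find h else n

theorem numOpened_pos (n : ℕ) (hn : 0 < n) (τ v : ℕ → ℝ) : 1 ≤ numOpened n τ v := by
  unfold numOpened
  split
  · next h => exact (Nat.find_spec h).1.1
  · exact hn

/-- Total cost of the threshold policy with unit opening costs: the number of boxes
opened plus the best (minimum) value among the opened boxes. -/
noncomputable def thresholdCost (n : ℕ) (hn : 0 < n) (τ v : ℕ → ℝ) : ℝ :=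
  (numOpened n τ v : ℝ) +
    (Finset.Icc 1 (numOpened n τ v)).inf'
      (Finset.nonempty_Icc.mpr (numOpened_pos n hn τ v)) v

def StopsAfter (n : ℕ) (τ v : ℕ → ℝ) (k : ℕ) : Prop :=
  (1 ≤ k ∧ k < n) ∧ ∃ j, 1 ≤ j ∧ j ≤ k ∧ v j ≤ τ (k + 1)

theorem StopsAfter.mono {n k : ℕ} {τ τ' v : ℕ → ℝ} (hτ : ∀ i, τ' i ≤ τ i)
    (h : StopsAfter n τ' v k) : StopsAfter n τ v k := by
  obtain ⟨hk, j, hj1, hjk, hvj⟩ := h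
  exact ⟨hk, j, hj1, hjk, hvj.trans (hτ _)⟩

section numOpened

variable {n : ℕ} {τ τ' v : ℕ → ℝ}

theorem numOpened_le : numOpened n τ v ≤ n := by
  unfold numOpened
  split
  · next h => exact (Nat.find_spec h).1.2.le
  · exact le_rfl

theorem numOpened_le_of_stopsAfter {k : ℕ} (h : StopsAfter n τ v k) : numOpened n τ v ≤ k := by
  unfold numOpened
  rw [dif_pos ⟨k, h⟩]
  exact Nat.find_min' _ h

theorem stopsAfter_numOpened (h : numOpened n τ v < n) :
    StopsAfter n τ v (numOpened n τ v) := by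
  unfold numOpened at h ⊢
  split at h
  · next hex => rw [dif_pos hex]; exact Nat.find_spec hex
  · exact absurd h (lt_irrefl n)

theorem not_stopsAfter_of_lt_numOpened {k : ℕ} (hk : k < numOpened n τ v) :
    ¬StopsAfter n τ v k :=
  fun h => (numOpened_le_of_stopsAfter h).not_gt hk

theorem numOpened_le_numOpened (hτ : ∀ i, τ' i ≤ τ i) :
    numOpened n τ v ≤ numOpened n τ' v := by
  by_contra! h
  have hstop := stopsAfter_numOpened (h.trans_le numOpened_le)
  exact (numOpened_le_of_stopsAfter (hstop.mono hτ)).not_gt h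

end numOpened

noncomputable def bestValue (n : ℕ) (hn : 0 < n) (τ v : ℕ → ℝ) : ℝ :=
  (Finset.Icc 1 (numOpened n τ v)).inf' (Finset.nonempty_Icc.mpr (numOpened_pos n hn τ v)) v

section bestValue

variable {n : ℕ} (hn : 0 < n) {τ τ' v : ℕ → ℝ}

theorem thresholdCost_eq_numOpened_add_bestValue :
    thresholdCost n hn τ v = numOpened n τ v + bestValue n hn τ v :=
  rfl

theorem bestValue_le_bestValue (h : numOpened n τ v ≤ numOpened n τ' v) :
    bestValue n hn τ' v ≤ bestValue n hn τ v :=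
  Finset.inf'_mono v (Finset.Icc_subset_Icc_right h) _

theorem bestValue_nonneg (hv : ∀ i, 0 ≤ v i) : 0 ≤ bestValue n hn τ v :=
  Finset.le_inf' _ _ fun j _ => hv j

theorem bestValue_mem_Ioc_of_numOpened_lt (h : numOpened n τ v < numOpened n τ' v) :
    bestValue n hn τ v ∈
      Set.Ioc (τ' (numOpened n τ v + 1)) (τ (numOpened n τ v + 1)) := by
  set k := numOpened n τ v
  have hkn : k < n := h.trans_le numOpened_le
  obtain ⟨hk, j, hj1, hjk, hvj⟩ := stopsAfter_numOpened hkn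
  have hcont := not_stopsAfter_of_lt_numOpened h
  refine ⟨(Finset.lt_inf'_iff _).mpr fun i hi => ?_, ?_⟩
  · obtain ⟨hi1, hik⟩ := Finset.mem_Icc.mp hi
    by_contra! hvi
    exact hcont ⟨hk, i, hi1, hik, hvi⟩
  · exact (Finset.inf'_le v (Finset.mem_Icc.mpr ⟨hj1, hjk⟩)).trans hvj

theorem cap_lt_bestValue_of_numOpened_lt {C : ℝ}
    (h : numOpened n τ v < numOpened n (fun i => min (τ i) C) v) :
    C < bestValue n hn τ v := by
  obtain ⟨hcap, hτ⟩ := bestValue_mem_Ioc_of_numOpened_lt hn h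
  exact (min_lt_iff.mp hcap).resolve_left hτ.not_gt

end bestValue

theorem capped_thresholds_cost_le_general (n : ℕ) (hn : 0 < n) (τ v : ℕ → ℝ)
    (hv : ∀ i, 0 ≤ v i) (ε : ℝ) (hε : 0 < ε) :
    thresholdCost n hn (fun i => min (τ i) ((n : ℝ) / ε)) v ≤
      (1 + ε) * thresholdCost n hn τ v := by
  set τ' : ℕ → ℝ := fun i => min (τ i) ((n : ℝ) / ε)
  simp only [thresholdCost_eq_numOpened_add_bestValue]
  have hk : (0 : ℝ) ≤ numOpened n τ v := Nat.cast_nonneg _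
  have hm := bestValue_nonneg hn (τ := τ) hv
  rcases (numOpened_le_numOpened (v := v) fun i => min_le_left (τ i) _).eq_or_lt with heq | hlt
  · have hbest : bestValue n hn τ' v = bestValue n hn τ v :=
      (bestValue_le_bestValue hn heq.le).antisymm (bestValue_le_bestValue hn heq.ge)
    rw [← heq, hbest]
    exact le_mul_of_one_le_left (add_nonneg hk hm) (by linarith)
  · have hcap : n < ε * bestValue n hn τ v := by
      have := cap_lt_bestValue_of_numOpened_lt hn hlt
      rwa [div_lt_iff₀ hε, mul_comm] at this
    have hk' : (numOpened n τ' v : ℝ) ≤ n := by exact_mod_cast numOpened_le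
    calc (numOpened n τ' v : ℝ) + bestValue n hn τ' v
        ≤ n + bestValue n hn τ v := add_le_add hk' (bestValue_le_bestValue hn hlt.le)
      _ ≤ (1 + ε) * bestValue n hn τ v := by linarith
      _ ≤ (1 + ε) * (numOpened n τ v + bestValue n hn τ v) := by gcongr; linarith

/-- Capping the thresholds at `n/ε` increases the cost of a threshold policy by a factor
of at most `1 + ε` on every value vector. -/
theorem capped_thresholds_cost_le (n : ℕ) (hn : 0 < n) (τ v : ℕ → ℝ)
    (hτ : ∀ i, 0 ≤ τ i) (hv : ∀ i, 0 ≤ v i) (ε : ℝ) (hε : 0 < ε) :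
    thresholdCost n hn (fun i => min (τ i) ((n : ℝ) / ε)) v ≤
      (1 + ε) * thresholdCost n hn τ v :=
  capped_thresholds_cost_le_general n hn τ v hv ε hε
end
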